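/- The order-3 braided antisymmetriser A⁽³⁾ := (id − σ₂) ∘ (id − σ₁ + σ₁∘σ₂) on V⊗V⊗V satisfies A⁽³⁾ ∘ A⁽³⁾ = (1 + 2q² + 2q⁴ + q⁶) · A⁽³⁾; in particular A⁽³⁾ acts as multiplication by λ₃ = 1+2q²+2q⁴+q⁶ on its range. -/

import Mathlib

open TensorProduct

noncomputable section

/-- The 3-dimensional complex vector space with basis `ω 0 = ω₋`, `ω 1 = ω₊`, `ω 2 = ω_z`. -/
abbrev V : Type := Fin 3 → ℂ

/-- The distinguished basis `(ω₋, ω₊, ω_z)` of `V`. -/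
def ω : Fin 3 → V := fun i => Pi.basisFun ℂ (Fin 3) i

/-- The basis `ω_a ⊗ ω_b` of `V ⊗ V`. -/
def basisVV : Module.Basis (Fin 3 × Fin 3) ℂ (V ⊗[ℂ] V) :=
  (Pi.basisFun ℂ (Fin 3)).tensorProduct (Pi.basisFun ℂ (Fin 3))

/-- The values of the braiding `σ` on the basis vectors `ω_a ⊗ ω_b`
(first index `0 = −`, `1 = +`, `2 = z`). -/
def σval (q : ℝ) : Fin 3 → Fin 3 → V ⊗[ℂ] V :=
  ![![ω 0 ⊗ₜ[ℂ] ω 0,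
     (1 - (q : ℂ) ^ 2) • (ω 0 ⊗ₜ[ℂ] ω 1) + ((q : ℂ) ^ 2)⁻¹ • (ω 1 ⊗ₜ[ℂ] ω 0),
     (1 - (q : ℂ) ^ 2) • (ω 0 ⊗ₜ[ℂ] ω 2) + ((q : ℂ) ^ 4)⁻¹ • (ω 2 ⊗ₜ[ℂ] ω 0)],
    ![(q : ℂ) ^ 4 • (ω 0 ⊗ₜ[ℂ] ω 1),
      ω 1 ⊗ₜ[ℂ] ω 1,
      (q : ℂ) ^ 6 • (ω 2 ⊗ₜ[ℂ] ω 1)],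
    ![(q : ℂ) ^ 6 • (ω 0 ⊗ₜ[ℂ] ω 2),
      (1 - (q : ℂ) ^ 2) • (ω 2 ⊗ₜ[ℂ] ω 1) + ((q : ℂ) ^ 4)⁻¹ • (ω 1 ⊗ₜ[ℂ] ω 2),
      ω 2 ⊗ₜ[ℂ] ω 2]]

/-- The braiding `σ` of Woronowicz's 3d left covariant calculus on `SU_q(2)`. -/
def σmap (q : ℝ) : (V ⊗[ℂ] V) →ₗ[ℂ] (V ⊗[ℂ] V) :=
  basisVV.constr ℂ (fun p => σval q p.1 p.2)

/-- `V ⊗ V ⊗ V`. -/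
abbrev V3 : Type := V ⊗[ℂ] (V ⊗[ℂ] V)

instance : AddCommGroup V3 := inferInstance
instance : Module ℂ V3 := inferInstance

/-- `σ₁ = σ ⊗ id` acting on the first two tensor slots of `V ⊗ V ⊗ V`. -/
def σ₁ (q : ℝ) : V3 →ₗ[ℂ] V3 :=
  (TensorProduct.assoc ℂ V V V).toLinearMap ∘ₗ
    (TensorProduct.map (σmap q) LinearMap.id) ∘ₗ
      (TensorProduct.assoc ℂ V V V).symm.toLinearMap

/-- `σ₂ = id ⊗ σ` acting on the last two tensor slots of `V ⊗ V ⊗ V`. -/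
def σ₂ (q : ℝ) : V3 →ₗ[ℂ] V3 :=
  TensorProduct.map LinearMap.id (σmap q)

/-- The order-3 braided antisymmetriser `A⁽³⁾ = (id − σ₂) ∘ (id − σ₁ + σ₁∘σ₂)`. -/
def A3 (q : ℝ) : V3 →ₗ[ℂ] V3 :=
  ((LinearMap.id : V3 →ₗ[ℂ] V3) - σ₂ q) ∘ₗ
    ((LinearMap.id : V3 →ₗ[ℂ] V3) - σ₁ q + σ₁ q ∘ₗ σ₂ q)

/-! Both sides are compared on the 27 basis vectors `ω i ⊗ ω j ⊗ ω k`. Since `σ` maps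
`ω a ⊗ ω b` into the span of `ω a ⊗ ω b` and `ω b ⊗ ω a`, each comparison stays inside the
span of the permutations of one basis vector and reduces to identities between Laurent
polynomials in `q`, which is where `q ≠ 0` enters. -/

theorem LinearMap.apply_eq_smul_of_comp_self_eq_smul {R M : Type*} [CommSemiring R]
    [AddCommMonoid M] [Module R M] {f : M →ₗ[R] M} {c : R} (hf : f ∘ₗ f = c • f) {x : M}
    (hx : x ∈ LinearMap.range f) : f x = c • x := by
  obtain ⟨y, rfl⟩ := hx
  exact LinearMap.congr_fun hf y

lemma σmap_tmul (q : ℝ) (i j : Fin 3) : σmap q (ω i ⊗ₜ[ℂ] ω j) = σval q i j := by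
  have : ω i ⊗ₜ[ℂ] ω j = basisVV (i, j) := by
    simp [basisVV, ω]
  rw [this, σmap, Module.Basis.constr_basis]

lemma σ₁_tmul (q : ℝ) (x y z : V) :
    σ₁ q (x ⊗ₜ[ℂ] (y ⊗ₜ[ℂ] z)) = TensorProduct.assoc ℂ V V V (σmap q (x ⊗ₜ[ℂ] y) ⊗ₜ[ℂ] z) := by
  simp [σ₁]

lemma σ₂_tmul (q : ℝ) (x : V) (t : V ⊗[ℂ] V) : σ₂ q (x ⊗ₜ[ℂ] t) = x ⊗ₜ[ℂ] σmap q t := rfl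

lemma V3_ext {f g : V3 →ₗ[ℂ] V3}
    (h : ∀ i j k, f (ω i ⊗ₜ[ℂ] (ω j ⊗ₜ[ℂ] ω k)) = g (ω i ⊗ₜ[ℂ] (ω j ⊗ₜ[ℂ] ω k))) : f = g :=
  ((Pi.basisFun ℂ (Fin 3)).tensorProduct basisVV).ext fun ⟨i, j, k⟩ => by
    simpa [basisVV, ω] using h i j k

lemma A3_apply (q : ℝ) (v : V3) :
    A3 q v = v - σ₁ q v + σ₁ q (σ₂ q v) - σ₂ q v + σ₂ q (σ₁ q v) - σ₂ q (σ₁ q (σ₂ q v)) := by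
  simp only [A3, LinearMap.comp_apply, LinearMap.add_apply, LinearMap.sub_apply,
    LinearMap.id_apply, map_add, map_sub]
  abel

set_option maxHeartbeats 1000000 in
theorem A3_comp_self {q : ℝ} (hq : q ≠ 0) :
    A3 q ∘ₗ A3 q = (1 + 2 * (q : ℂ) ^ 2 + 2 * (q : ℂ) ^ 4 + (q : ℂ) ^ 6) • A3 q := by
  have hq' : (q : ℂ) ≠ 0 := by exact_mod_cast hq
  refine V3_ext fun i j k => ?_
  simp only [LinearMap.comp_apply, LinearMap.smul_apply, A3_apply, map_add, map_sub]
  fin_cases i <;> fin_cases j <;> fin_cases k <;>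
  · simp only [Fin.isValue, Fin.zero_eta, Fin.mk_one, Fin.reduceFinMk, map_add, map_smul,
      σ₁_tmul, σ₂_tmul, σmap_tmul, σval, Matrix.cons_val_zero, Matrix.cons_val_one,
      Matrix.cons_val_two, Matrix.head_cons, Matrix.tail_cons, TensorProduct.assoc_tmul,
      TensorProduct.add_tmul, TensorProduct.tmul_add, ← TensorProduct.smul_tmul',
      TensorProduct.tmul_smul, smul_add, smul_sub, smul_smul]
    match_scalars <;> field_simp <;> ring

theorem A3_squared_general (q : ℝ) (hq0 : 0 < q) :
    A3 q ∘ₗ A3 q = (1 + 2 * (q : ℂ) ^ 2 + 2 * (q : ℂ) ^ 4 + (q : ℂ) ^ 6) • A3 q ∧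
      ∀ x ∈ LinearMap.range (A3 q),
        A3 q x = (1 + 2 * (q : ℂ) ^ 2 + 2 * (q : ℂ) ^ 4 + (q : ℂ) ^ 6) • x := by
  have hsquare := A3_comp_self hq0.ne'
  exact ⟨hsquare, fun _ hx => LinearMap.apply_eq_smul_of_comp_self_eq_smul hsquare hx⟩

/-- `A⁽³⁾ ∘ A⁽³⁾ = (1+2q²+2q⁴+q⁶) · A⁽³⁾`; in particular `A⁽³⁾` acts as
multiplication by `λ₃ = 1+2q²+2q⁴+q⁶` on its range. -/
theorem A3_squared (q : ℝ) (hq0 : 0 < q) (hq1 : q < 1) :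
    A3 q ∘ₗ A3 q = (1 + 2 * (q : ℂ) ^ 2 + 2 * (q : ℂ) ^ 4 + (q : ℂ) ^ 6) • A3 q ∧
      ∀ x ∈ LinearMap.range (A3 q),
        A3 q x = (1 + 2 * (q : ℂ) ^ 2 + 2 * (q : ℂ) ^ 4 + (q : ℂ) ^ 6) • x :=
  A3_squared_general q hq0

end
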